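/- arXiv:1612.01444 — 2 statements merged into one kernel-verified Lean document; each statement's English description precedes it below -/
import Mathlib

section
/- Let p and e be primes with p > 2 and e > 2, and let H = H(F_{p^e}) be the Heisenberg group with commutator subgroup H'. For every subgroup N ≤ H', the automorphism group Aut(H/N) acts transitively on the set of maximal subgroups of H/N: for any two maximal subgroups M₁, M₂ of H/N there exists φ ∈ Aut(H/N) with φ(M₁) = M₂. -/
/-- The Heisenberg group over a field `K`: underlying set `K × K × K` with
multiplication `(α,β,γ)·(α',β',γ') = (α+α', β+β', γ+γ'+α·β')`. -/
def Heisenberg (K : Type) [Field K] : Type := K × K × K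

namespace Heisenberg

variable {K : Type} [Field K]

instance : Mul (Heisenberg K) :=
  ⟨fun a b => (a.1 + b.1, a.2.1 + b.2.1, a.2.2 + b.2.2 + a.1 * b.2.1)⟩

instance : One (Heisenberg K) := ⟨((0 : K), (0 : K), (0 : K))⟩

instance : Inv (Heisenberg K) :=
  ⟨fun a => (-a.1, -a.2.1, -a.2.2 + a.1 * a.2.1)⟩

lemma mul_def (a b : Heisenberg K) :
    a * b = (a.1 + b.1, a.2.1 + b.2.1, a.2.2 + b.2.2 + a.1 * b.2.1) := rfl

lemma one_def : (1 : Heisenberg K) = ((0 : K), (0 : K), (0 : K)) := rfl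

lemma inv_def (a : Heisenberg K) : a⁻¹ = (-a.1, -a.2.1, -a.2.2 + a.1 * a.2.1) := rfl

instance : Group (Heisenberg K) where
  mul := (· * ·)
  one := 1
  inv := (·⁻¹)
  mul_assoc a b c := by
    show (a * b) * c = a * (b * c)
    simp only [mul_def]
    refine Prod.ext ?_ (Prod.ext ?_ ?_) <;> (try erw [mul_def]) <;> (try erw [mul_def]) <;> dsimp <;> ring
  one_mul a := by
    show 1 * a = a
    simp only [mul_def, one_def]
    refine Prod.ext ?_ (Prod.ext ?_ ?_) <;> (try erw [mul_def]) <;> (try erw [mul_def]) <;> dsimp <;> ring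
  mul_one a := by
    show a * 1 = a
    simp only [mul_def, one_def]
    refine Prod.ext ?_ (Prod.ext ?_ ?_) <;> (try erw [mul_def]) <;> (try erw [mul_def]) <;> dsimp <;> ring
  inv_mul_cancel a := by
    show a⁻¹ * a = 1
    simp only [mul_def, one_def, inv_def]
    refine Prod.ext ?_ (Prod.ext ?_ ?_) <;> (try erw [mul_def]) <;> (try erw [mul_def]) <;> dsimp <;> ring

instance [Finite K] : Finite (Heisenberg K) := inferInstanceAs (Finite (K × K × K))

end Heisenberg

/-!
Since `N` lies in the centre `H' = Z(H)`, the quotient `H/N` has class at most two, so every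
maximal subgroup contains `(H/N)' = H'/N` and is the preimage of a maximal subgroup of
`H/H' ≅ F_q²`, i.e. of an `F_p`-hyperplane. Through the trace form every such hyperplane is
`{v | Tr(w₁ v₁ + w₂ v₂) = 0}` for some nonzero `w ∈ F_q²`. Each `A ∈ SL₂(F_q)` lifts (using
`1/2`, so `p ≠ 2`) to an automorphism of `H` fixing `H'` pointwise, hence to an automorphism
of `H/N`, and `SL₂(F_q)` acts transitively on the nonzero vectors `w`.
-/

theorem Subgroup.map_center_le_center_of_surjective {G G' : Type*} [Group G] [Group G']
    {f : G →* G'} (hf : Function.Surjective f) : (center G).map f ≤ center G' := by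
  rintro _ ⟨z, hz, rfl⟩
  refine mem_center_iff.mpr fun g => ?_
  obtain ⟨g, rfl⟩ := hf g
  rw [← map_mul, ← map_mul, mem_center_iff.mp hz g]

theorem MonoidHom.map_commutator_of_surjective {G G' : Type*} [Group G] [Group G']
    {f : G →* G'} (hf : Function.Surjective f) : (commutator G).map f = commutator G' := by
  rw [commutator_def, commutator_def, Subgroup.map_commutator, Subgroup.map_top_of_surjective f hf]

theorem commutator_le_center_of_surjective {G G' : Type*} [Group G] [Group G'] {f : G →* G'}
    (hf : Function.Surjective f) (hG : commutator G ≤ Subgroup.center G) :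
    commutator G' ≤ Subgroup.center G' := by
  rw [← f.map_commutator_of_surjective hf]
  exact (Subgroup.map_mono hG).trans (Subgroup.map_center_le_center_of_surjective hf)

theorem Subgroup.isCoatom_map_of_surjective {G G' : Type*} [Group G] [Group G'] {f : G →* G'}
    (hf : Function.Surjective f) {M : Subgroup G} (hM : IsCoatom M) (hker : f.ker ≤ M) :
    IsCoatom (M.map f) := by
  rw [← comap_map_eq_self hker] at hM
  refine ⟨fun htop => hM.1 (by rw [htop, comap_top]), fun W hW => comap_injective hf ?_⟩
  rw [comap_top]
  exact hM.2 _ ((comap_lt_comap_of_surjective hf).mpr hW)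

theorem commutator_le_of_isCoatom {G : Type*} [Group G] (hG : commutator G ≤ Subgroup.center G)
    {M : Subgroup G} (hM : IsCoatom M) : commutator G ≤ M := by
  open Subgroup in
  by_contra hle
  have hsup : M ⊔ commutator G = ⊤ := hM.2 _ (left_lt_sup.2 hle)
  have hcentral {z : G} (hz : z ∈ commutator G) (g : G) : z * g * z⁻¹ = g := by
    rw [(mem_center_iff.mp (hG hz) g).symm, mul_inv_cancel_right]
  have : M.Normal := normalizer_eq_top_iff.mp <| top_le_iff.mp <| hsup ▸
    sup_le le_normalizer (le_normalizer_iff.mpr fun z hz m hm => (hcentral hz m).symm ▸ hm)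
  have hmap : (commutator G).map (QuotientGroup.mk' M) = ⊤ := by
    rw [← map_top_of_surjective _ (QuotientGroup.mk'_surjective M), ← hsup, Subgroup.map_sup,
      QuotientGroup.map_mk'_self, bot_sup_eq]
  have hab : ⁅commutator G, commutator G⁆ = ⊥ :=
    commutator_eq_bot_iff_le_centralizer.mpr (hG.trans (center_le_centralizer _))
  apply hle
  rw [← QuotientGroup.ker_mk' M, ← Subgroup.map_eq_bot_iff, commutator_def, map_commutator,
    map_top_of_surjective _ (QuotientGroup.mk'_surjective M), ← hmap, ← map_commutator, hab,
    Subgroup.map_bot]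

theorem Submodule.exists_ker_eq_of_isCoatom {F V : Type*} [Field F] [AddCommGroup V]
    [Module F V] {W : Submodule F V} (hW : IsCoatom W) :
    ∃ f : Module.Dual F V, LinearMap.ker f = W := by
  obtain ⟨f, hf, hWf⟩ := W.exists_dual_map_eq_bot_of_lt_top hW.lt_top inferInstance
  refine ⟨f, (hW.le_iff.mp (LinearMap.le_ker_iff_map.mpr hWf)).resolve_left ?_⟩
  rwa [LinearMap.ker_eq_top]

theorem exists_det_eq_one_of_ne_zero {K : Type*} [Field K] {v w : K × K} (hv : v ≠ 0)
    (hw : w ≠ 0) :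
    ∃ a b c d : K, a * d - b * c = 1 ∧ a * v.1 + b * v.2 = w.1 ∧ c * v.1 + d * v.2 = w.2 := by
  obtain ⟨x, y⟩ := v
  obtain ⟨x', y'⟩ := w
  simp only [ne_eq, Prod.mk_eq_zero, not_and_or] at hv hw
  by_cases hx : x = 0 <;> by_cases hx' : x' = 0
  · have hy : y ≠ 0 := hv.resolve_left (not_not.mpr hx)
    have hy' : y' ≠ 0 := hw.resolve_left (not_not.mpr hx')
    exact ⟨y / y', 0, 0, y' / y, by field_simp; ring, by simp [hx, hx'],
      by field_simp [hx]; ring⟩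
  · have hy : y ≠ 0 := hv.resolve_left (not_not.mpr hx)
    exact ⟨0, x' / y, -y / x', y' / y, by field_simp; ring, by simp [hx]; field_simp,
      by field_simp [hx]; simp [hx]⟩
  · have hy' : y' ≠ 0 := hw.resolve_left (not_not.mpr hx')
    exact ⟨y / y', -x / y', y' / x, 0, by field_simp; ring, by simp [hx']; field_simp; ring,
      by field_simp; ring⟩
  · exact ⟨x' / x, 0, y' / x - y / x', x / x', by field_simp; ring, by field_simp; ring,
      by field_simp; ring⟩

/-- The row vector `v` times the matrix `!![a, b; c, d]`. -/
def vecMulTwo {K : Type*} [Field K] (a b c d : K) (v : K × K) : K × K :=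
  (a * v.1 + c * v.2, b * v.1 + d * v.2)

section Hyperplanes

variable {F K : Type*} [Field F] [Field K] [Algebra F K] [FiniteDimensional F K]
  [Algebra.IsSeparable F K]

theorem exists_ne_zero_forall_mem_iff_trace_eq_zero {W : Submodule F (K × K)}
    (hW : IsCoatom W) :
    ∃ w : K × K, w ≠ 0 ∧
      ∀ v, v ∈ W ↔ Algebra.trace F K (w.1 * v.1 + w.2 * v.2) = 0 := by
  obtain ⟨f, rfl⟩ := Submodule.exists_ker_eq_of_isCoatom hW
  have hB := traceForm_nondegenerate F K
  obtain ⟨α, hα⟩ := ((Algebra.traceForm F K).toDual hB).surjective (f ∘ₗ .inl F K K)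
  obtain ⟨β, hβ⟩ := ((Algebra.traceForm F K).toDual hB).surjective (f ∘ₗ .inr F K K)
  have hf (v : K × K) : f v = Algebra.trace F K (α * v.1 + β * v.2) := by
    have h₁ := LinearMap.congr_fun hα v.1
    have h₂ := LinearMap.congr_fun hβ v.2
    simp only [LinearMap.BilinForm.toDual_def, Algebra.traceForm_apply, LinearMap.comp_apply,
      LinearMap.inl_apply, LinearMap.inr_apply] at h₁ h₂
    rw [map_add, h₁, h₂, ← map_add, Prod.mk_add_mk, add_zero, zero_add]
  refine ⟨(α, β), fun h0 => hW.1 ?_, fun v => by rw [LinearMap.mem_ker, hf]⟩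
  obtain ⟨rfl, rfl⟩ := Prod.mk_eq_zero.mp h0
  ext v
  simp [hf]

theorem exists_det_eq_one_forall_mem_iff {W₁ W₂ : Submodule F (K × K)} (h₁ : IsCoatom W₁)
    (h₂ : IsCoatom W₂) :
    ∃ a b c d : K, a * d - b * c = 1 ∧ ∀ v, v ∈ W₁ ↔ vecMulTwo a b c d v ∈ W₂ := by
  obtain ⟨w₁, hw₁, hW₁⟩ := exists_ne_zero_forall_mem_iff_trace_eq_zero h₁
  obtain ⟨w₂, hw₂, hW₂⟩ := exists_ne_zero_forall_mem_iff_trace_eq_zero h₂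
  obtain ⟨a, b, c, d, hdet, ha, hc⟩ := exists_det_eq_one_of_ne_zero hw₂ hw₁
  refine ⟨a, b, c, d, hdet, fun v => ?_⟩
  rw [hW₁, hW₂, vecMulTwo, ← ha, ← hc]
  ring_nf

end Hyperplanes

namespace Heisenberg

variable {K : Type} [Field K]

def mk (x y z : K) : Heisenberg K := (x, y, z)

@[ext] lemma ext {u v : Heisenberg K} (h₁ : u.1 = v.1) (h₂ : u.2.1 = v.2.1)
    (h₃ : u.2.2 = v.2.2) : u = v :=
  Prod.ext h₁ (Prod.ext h₂ h₃)

@[simp] lemma mk_fst (x y z : K) : (mk x y z).1 = x := rfl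
@[simp] lemma mk_snd_fst (x y z : K) : (mk x y z).2.1 = y := rfl
@[simp] lemma mk_snd_snd (x y z : K) : (mk x y z).2.2 = z := rfl
@[simp] lemma one_fst : (1 : Heisenberg K).1 = 0 := rfl
@[simp] lemma one_snd_fst : (1 : Heisenberg K).2.1 = 0 := rfl
@[simp] lemma one_snd_snd : (1 : Heisenberg K).2.2 = 0 := rfl
@[simp] lemma mul_fst (u v : Heisenberg K) : (u * v).1 = u.1 + v.1 := rfl
@[simp] lemma mul_snd_fst (u v : Heisenberg K) : (u * v).2.1 = u.2.1 + v.2.1 := rfl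
@[simp] lemma mul_snd_snd (u v : Heisenberg K) : (u * v).2.2 = u.2.2 + v.2.2 + u.1 * v.2.1 := rfl
@[simp] lemma inv_fst (u : Heisenberg K) : u⁻¹.1 = -u.1 := rfl
@[simp] lemma inv_snd_fst (u : Heisenberg K) : u⁻¹.2.1 = -u.2.1 := rfl
@[simp] lemma inv_snd_snd (u : Heisenberg K) : u⁻¹.2.2 = -u.2.2 + u.1 * u.2.1 := rfl

def toProd : Heisenberg K →* Multiplicative (K × K) where
  toFun u := .ofAdd (u.1, u.2.1)
  map_one' := rfl
  map_mul' _ _ := rfl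

lemma toProd_surjective : Function.Surjective (toProd (K := K)) :=
  fun v => ⟨mk v.toAdd.1 v.toAdd.2 0, rfl⟩

lemma mem_ker_toProd {u : Heisenberg K} : u ∈ toProd.ker ↔ u.1 = 0 ∧ u.2.1 = 0 := by
  simp [toProd, MonoidHom.mem_ker, ← ofAdd_zero]

open scoped commutatorElement in
lemma ker_toProd : toProd.ker = commutator (Heisenberg K) := by
  refine le_antisymm (fun u hu => ?_) (Abelianization.commutator_subset_ker _)
  obtain ⟨h₁, h₂⟩ := mem_ker_toProd.mp hu
  have hcomm : u = ⁅mk (1 : K) 0 0, mk 0 u.2.2 0⁆ := by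
    ext <;> simp [commutatorElement_def, h₁, h₂]
  rw [hcomm]
  exact Subgroup.commutator_mem_commutator (Subgroup.mem_top _) (Subgroup.mem_top _)

lemma commutator_le_center : commutator (Heisenberg K) ≤ Subgroup.center (Heisenberg K) := by
  rw [← ker_toProd]
  intro u hu
  obtain ⟨h₁, h₂⟩ := mem_ker_toProd.mp hu
  refine Subgroup.mem_center_iff.mpr fun v => ?_
  ext <;> simp only [mul_fst, mul_snd_fst, mul_snd_snd, h₁, h₂] <;> ring

section SL2

variable [Invertible (2 : K)]

/-- Lifts `v ↦ vecMulTwo a b c d v` to `H`. The last coordinate is corrected by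
`q(x, y) = (a b x² + c d y²) / 2 + b c x y`, whose polarization `q(u + u') - q(u) - q(u')` is
`(a x + c y)(b x' + d y') - x y'` because `a d - b c = 1`. -/
def sl2Hom (a b c d : K) (hdet : a * d - b * c = 1) : Heisenberg K →* Heisenberg K where
  toFun u := mk (a * u.1 + c * u.2.1) (b * u.1 + d * u.2.1)
    (u.2.2 + ⅟2 * a * b * u.1 ^ 2 + ⅟2 * c * d * u.2.1 ^ 2 + b * c * u.1 * u.2.1)
  map_one' := by ext <;> simp
  map_mul' u v := by
    ext <;> simp only [mul_fst, mul_snd_fst, mul_snd_snd, mk_fst, mk_snd_fst, mk_snd_snd]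
    · ring
    · ring
    · linear_combination (-(u.1 * v.2.1)) * hdet +
        (a * b * u.1 * v.1 + c * d * u.2.1 * v.2.1) * invOf_two_add_invOf_two (R := K)

lemma sl2Hom_adjugate_comp (a b c d : K) (hdet : a * d - b * c = 1) :
    (sl2Hom d (-b) (-c) a (by linear_combination hdet)).comp (sl2Hom a b c d hdet) =
      MonoidHom.id (Heisenberg K) := by
  ext u <;> simp only [sl2Hom, MonoidHom.comp_apply, MonoidHom.coe_mk, OneHom.coe_mk,
    MonoidHom.id_apply, mk_fst, mk_snd_fst, mk_snd_snd]
  · linear_combination u.1 * hdet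
  · linear_combination u.2.1 * hdet
  · linear_combination
      (-(⅟2 * a * b * u.1 ^ 2 + ⅟2 * c * d * u.2.1 ^ 2 + b * c * u.1 * u.2.1)) * hdet -
        (a * b ^ 2 * c * u.1 ^ 2 + b * c ^ 2 * d * u.2.1 ^ 2 + 2 * a * b * c * d * u.1 * u.2.1) *
          invOf_two_add_invOf_two (R := K)

def sl2Aut (a b c d : K) (hdet : a * d - b * c = 1) : Heisenberg K ≃* Heisenberg K :=
  (sl2Hom a b c d hdet).toMulEquiv (sl2Hom d (-b) (-c) a (by linear_combination hdet))
    (sl2Hom_adjugate_comp a b c d hdet)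
    (by simpa only [neg_neg] using sl2Hom_adjugate_comp d (-b) (-c) a (by linear_combination hdet))

lemma sl2Aut_apply_of_mem_commutator (a b c d : K) (hdet : a * d - b * c = 1) {u : Heisenberg K}
    (hu : u ∈ commutator (Heisenberg K)) : sl2Aut a b c d hdet u = u := by
  obtain ⟨h₁, h₂⟩ := mem_ker_toProd.mp (ker_toProd.ge hu)
  ext <;> simp [sl2Aut, sl2Hom, h₁, h₂]

lemma map_sl2Aut_of_le_commutator (a b c d : K) (hdet : a * d - b * c = 1)
    {N : Subgroup (Heisenberg K)} (hN : N ≤ commutator (Heisenberg K)) :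
    N.map (sl2Aut a b c d hdet).toMonoidHom = N := by
  ext u
  refine ⟨?_, fun hu => ⟨u, hu, sl2Aut_apply_of_mem_commutator a b c d hdet (hN hu)⟩⟩
  rintro ⟨v, hv, rfl⟩
  rwa [MulEquiv.coe_toMonoidHom, sl2Aut_apply_of_mem_commutator a b c d hdet (hN hv)]

end SL2

section Quotient

variable (N : Subgroup (Heisenberg K)) [N.Normal] (hN : N ≤ commutator (Heisenberg K))

def quotToProd : Heisenberg K ⧸ N →* Multiplicative (K × K) :=
  QuotientGroup.lift N toProd (hN.trans ker_toProd.ge)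

lemma quotToProd_surjective : Function.Surjective (quotToProd N hN) :=
  QuotientGroup.lift_surjective_of_surjective _ _ toProd_surjective _

lemma ker_quotToProd : (quotToProd N hN).ker = commutator (Heisenberg K ⧸ N) := by
  rw [quotToProd, QuotientGroup.ker_lift, ker_toProd,
    MonoidHom.map_commutator_of_surjective (QuotientGroup.mk'_surjective N)]

theorem exists_isCoatom_forall_mem_iff (p : ℕ) [Fact p.Prime] [Algebra (ZMod p) K]
    {M : Subgroup (Heisenberg K ⧸ N)} (hM : IsCoatom M) :
    ∃ W : Submodule (ZMod p) (K × K), IsCoatom W ∧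
      ∀ g, g ∈ M ↔ (quotToProd N hN g).toAdd ∈ W := by
  have hker : (quotToProd N hN).ker ≤ M := (ker_quotToProd N hN).trans_le
    (commutator_le_of_isCoatom (commutator_le_center_of_surjective
      (QuotientGroup.mk'_surjective N) commutator_le_center) hM)
  refine ⟨AddSubgroup.toZModSubmodule p (Subgroup.toAddSubgroup' (M.map (quotToProd N hN))),
    ?_, fun g => ?_⟩
  · rw [OrderIso.isCoatom_iff, OrderIso.isCoatom_iff]
    exact Subgroup.isCoatom_map_of_surjective (quotToProd_surjective N hN) hM hker
  · show g ∈ M ↔ quotToProd N hN g ∈ M.map (quotToProd N hN)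
    rw [← Subgroup.mem_comap, Subgroup.comap_map_eq_self hker]

variable [Invertible (2 : K)]

def quotSl2Aut (a b c d : K) (hdet : a * d - b * c = 1) :
    (Heisenberg K ⧸ N) ≃* (Heisenberg K ⧸ N) :=
  QuotientGroup.congr N N (sl2Aut a b c d hdet) (map_sl2Aut_of_le_commutator a b c d hdet hN)

lemma quotToProd_quotSl2Aut (a b c d : K) (hdet : a * d - b * c = 1) (g : Heisenberg K ⧸ N) :
    (quotToProd N hN (quotSl2Aut N hN a b c d hdet g)).toAdd =
      vecMulTwo a b c d (quotToProd N hN g).toAdd := by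
  induction g using QuotientGroup.induction_on with
  | H u => rfl

end Quotient

end Heisenberg

theorem heisenberg_quotient_aut_transitive_on_maximal_general
    (p e : ℕ) (hp : p.Prime) (hp2 : 2 < p)
    (K : Type) [Field K] [Fintype K] (hK : Fintype.card K = p ^ e)
    (N : Subgroup (Heisenberg K)) [N.Normal]
    (hN : N ≤ commutator (Heisenberg K)) :
    ∀ M₁ M₂ : Subgroup (Heisenberg K ⧸ N), IsCoatom M₁ → IsCoatom M₂ →
      ∃ φ : (Heisenberg K ⧸ N) ≃* (Heisenberg K ⧸ N),
        Subgroup.map φ.toMonoidHom M₁ = M₂ := by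
  intro M₁ M₂ hM₁ hM₂
  have : Fact p.Prime := ⟨hp⟩
  have : CharP K p := charP_of_card_eq_prime_pow hK
  let : Algebra (ZMod p) K := ZMod.algebra K p
  let : Invertible (2 : K) :=
    invertibleOfNonzero (Ring.two_ne_zero (by rw [ringChar.eq K p]; omega))
  obtain ⟨W₁, hW₁, hM₁W⟩ := Heisenberg.exists_isCoatom_forall_mem_iff N hN p hM₁
  obtain ⟨W₂, hW₂, hM₂W⟩ := Heisenberg.exists_isCoatom_forall_mem_iff N hN p hM₂
  obtain ⟨a, b, c, d, hdet, hW⟩ := exists_det_eq_one_forall_mem_iff hW₁ hW₂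
  refine ⟨Heisenberg.quotSl2Aut N hN a b c d hdet, ?_⟩
  have hM : M₁ = M₂.comap (Heisenberg.quotSl2Aut N hN a b c d hdet).toMonoidHom := by
    ext g
    rw [hM₁W, hW, ← Heisenberg.quotToProd_quotSl2Aut, ← hM₂W]
    rfl
  rw [hM, Subgroup.map_comap_eq_self_of_surjective (MulEquiv.surjective _)]

/-- For every subgroup `N ≤ H'` of the Heisenberg group
`H = H(F_{p^e})`, the automorphism group of `H/N` acts transitively on the maximal
subgroups of `H/N`. -/
theorem heisenberg_quotient_aut_transitive_on_maximal
    (p e : ℕ) (hp : p.Prime) (he : e.Prime) (hp2 : 2 < p) (he2 : 2 < e)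
    (K : Type) [Field K] [Fintype K] (hK : Fintype.card K = p ^ e)
    (N : Subgroup (Heisenberg K)) [N.Normal]
    (hN : N ≤ commutator (Heisenberg K)) :
    ∀ M₁ M₂ : Subgroup (Heisenberg K ⧸ N), IsCoatom M₁ → IsCoatom M₂ →
      ∃ φ : (Heisenberg K ⧸ N) ≃* (Heisenberg K ⧸ N),
        Subgroup.map φ.toMonoidHom M₁ = M₂ :=
  heisenberg_quotient_aut_transitive_on_maximal_general p e hp hp2 K hK N hN
end

section
/- Let p be a prime, let L_1, …, L_g be r×s matrices over Z_p, and let A be a g'×g matrix over Z_p. Then the map (a, b, c) ↦ (a, b, c·A^T) is a group homomorphism from B(L_1, …, L_g) to B(Σ_j A_{1j} L_j, …, Σ_j A_{g'j} L_j), and it is surjective whenever A has rank g'. -/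
open Matrix in
/-- The Brahana-Baer group `B(L 0, …, L (t-1))` determined by a family of `r × s`
matrices over `ZMod p`: underlying set `(ZMod p)^r × (ZMod p)^s × (ZMod p)^t` with
multiplication `(a,b,c)·(a',b',c') = (a+a', b+b', c+c'+(a L₁ b'ᵀ, …, a L_t b'ᵀ))`. -/
def BGroup (p r s t : ℕ) (L : Fin t → Matrix (Fin r) (Fin s) (ZMod p)) : Type :=
  (Fin r → ZMod p) × (Fin s → ZMod p) × (Fin t → ZMod p)

namespace BGroup

open Matrix

variable {p r s t : ℕ} {L : Fin t → Matrix (Fin r) (Fin s) (ZMod p)}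

instance : Mul (BGroup p r s t L) :=
  ⟨fun x y => (x.1 + y.1, x.2.1 + y.2.1,
    fun i => x.2.2 i + y.2.2 i + x.1 ⬝ᵥ (L i).mulVec y.2.1)⟩

instance : One (BGroup p r s t L) := ⟨(0, 0, 0)⟩

instance : Inv (BGroup p r s t L) :=
  ⟨fun x => (-x.1, -x.2.1, fun i => -x.2.2 i + x.1 ⬝ᵥ (L i).mulVec x.2.1)⟩

lemma mul_def (x y : BGroup p r s t L) :
    x * y = (x.1 + y.1, x.2.1 + y.2.1,
      fun i => x.2.2 i + y.2.2 i + x.1 ⬝ᵥ (L i).mulVec y.2.1) := rfl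

lemma one_def : (1 : BGroup p r s t L) = (0, 0, 0) := rfl

lemma inv_def (x : BGroup p r s t L) :
    x⁻¹ = (-x.1, -x.2.1, fun i => -x.2.2 i + x.1 ⬝ᵥ (L i).mulVec x.2.1) := rfl

lemma mul_assoc_aux (x y z : BGroup p r s t L) : (x * y) * z = x * (y * z) := by
  rw [mul_def, mul_def, mul_def, mul_def]
  refine Prod.ext ?_ (Prod.ext ?_ ?_) <;> dsimp only
  · abel
  · abel
  · funext i
    simp [Matrix.mulVec_add, dotProduct_add, add_dotProduct]
    ring

lemma one_mul_aux (x : BGroup p r s t L) : 1 * x = x := by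
  rw [mul_def, one_def]
  refine Prod.ext ?_ (Prod.ext ?_ ?_) <;> dsimp only
  · abel
  · abel
  · funext i
    simp [zero_dotProduct]

lemma mul_one_aux (x : BGroup p r s t L) : x * 1 = x := by
  rw [mul_def, one_def]
  refine Prod.ext ?_ (Prod.ext ?_ ?_) <;> dsimp only
  · abel
  · abel
  · funext i
    simp [Matrix.mulVec_zero]

lemma inv_mul_cancel_aux (x : BGroup p r s t L) : x⁻¹ * x = 1 := by
  rw [mul_def, one_def, inv_def]
  refine Prod.ext ?_ (Prod.ext ?_ ?_) <;> dsimp only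
  · abel
  · abel
  · funext i
    simp [neg_dotProduct]

instance : Group (BGroup p r s t L) where
  mul := (· * ·)
  one := 1
  inv := (·⁻¹)
  mul_assoc x y z := mul_assoc_aux x y z
  one_mul x := one_mul_aux x
  mul_one x := mul_one_aux x
  inv_mul_cancel x := inv_mul_cancel_aux x

instance [NeZero p] : Finite (BGroup p r s t L) :=
  inferInstanceAs (Finite (_ × _ × _))

end BGroup

/-- The natural projection `B(L_1, …, L_g) → B(Σ_j A_{1j} L_j, …, Σ_j A_{g'j} L_j)`,
`(a, b, c) ↦ (a, b, c·Aᵀ)`. -/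
def BGroup.proj (p r s g g' : ℕ) (L : Fin g → Matrix (Fin r) (Fin s) (ZMod p))
    (A : Matrix (Fin g') (Fin g) (ZMod p)) :
    BGroup p r s g L → BGroup p r s g' (fun i => ∑ j, A i j • L j) :=
  fun x => (x.1, x.2.1, A.mulVec x.2.2)

open Matrix

theorem Matrix.mulVec_surjective_of_rank_eq_card {K m n : Type*} [Field K] [Fintype m]
    [Fintype n] (A : Matrix m n K) (h : A.rank = Fintype.card m) :
    Function.Surjective A.mulVec :=
  LinearMap.range_eq_top.mp <| Submodule.eq_top_of_finrank_eq <|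
    h.trans (Module.finrank_fintype_fun_eq_card K).symm

theorem Matrix.dotProduct_sum_smul_mulVec {R ι m n : Type*} [CommSemiring R] [Fintype ι]
    [Fintype m] [Fintype n] (c : ι → R) (L : ι → Matrix m n R) (a : m → R) (b : n → R) :
    a ⬝ᵥ (∑ j, c j • L j) *ᵥ b = c ⬝ᵥ fun j => a ⬝ᵥ L j *ᵥ b := by
  simp only [sum_mulVec, smul_mulVec, dotProduct_sum, dotProduct_smul, smul_eq_mul]
  rfl

namespace BGroup

variable {p r s g g' : ℕ} {L : Fin g → Matrix (Fin r) (Fin s) (ZMod p)}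
  {A : Matrix (Fin g') (Fin g) (ZMod p)}

theorem proj_mul (x y : BGroup p r s g L) :
    proj p r s g g' L A (x * y) = proj p r s g g' L A x * proj p r s g g' L A y := by
  refine Prod.ext rfl (Prod.ext rfl (funext fun i => ?_))
  change (A *ᵥ (x.2.2 + y.2.2 + fun j => x.1 ⬝ᵥ L j *ᵥ y.2.1)) i =
    (A *ᵥ x.2.2) i + (A *ᵥ y.2.2) i + x.1 ⬝ᵥ (∑ j, A i j • L j) *ᵥ y.2.1
  rw [mulVec_add, mulVec_add, dotProduct_sum_smul_mulVec]
  rfl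

theorem proj_surjective [Fact p.Prime] (hA : A.rank = g') :
    Function.Surjective (proj p r s g g' L A) := by
  rintro ⟨a, b, c⟩
  obtain ⟨c₀, rfl⟩ := A.mulVec_surjective_of_rank_eq_card (by rw [hA, Fintype.card_fin]) c
  exact ⟨(a, b, c₀), rfl⟩

end BGroup

/-- The map `(a, b, c) ↦ (a, b, c·Aᵀ)` is a group homomorphism from
`B(L_1, …, L_g)` to `B(Σ_j A_{1j} L_j, …, Σ_j A_{g'j} L_j)`, surjective whenever
the `g' × g` matrix `A` has rank `g'`. -/
theorem bgroup_proj_hom_and_surjective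
    (p : ℕ) (hp : p.Prime) (r s g g' : ℕ)
    (L : Fin g → Matrix (Fin r) (Fin s) (ZMod p))
    (A : Matrix (Fin g') (Fin g) (ZMod p)) :
    (∀ x y : BGroup p r s g L,
      BGroup.proj p r s g g' L A (x * y) =
        BGroup.proj p r s g g' L A x * BGroup.proj p r s g g' L A y) ∧
    (A.rank = g' → Function.Surjective (BGroup.proj p r s g g' L A)) :=
  have : Fact p.Prime := ⟨hp⟩
  ⟨BGroup.proj_mul, BGroup.proj_surjective⟩
end
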